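/- (Lemma 1) Let P ≥ 1, N ≥ 1, let H_0, …, H_{P-1} be N×N complex matrices, let h̃_0, …, h̃_{P-1} ∈ ℂ, let θ_0, …, θ_{P-1} ∈ ℝ, and set z_i = exp(−i·θ_i). Suppose the AF-domain channel matrix at symbol k is H_{AFD,k} = ∑_{i=0}^{P-1} h̃_i · z_i^k · H_i, and a fixed pilot vector x_p ∈ ℂ^N is transmitted on every symbol, so the noise-free received pilot is y_k = H_{AFD,k} · x_p. Then the sequence of received pilot vectors possesses a P-th order autoregressive property: there exist complex coefficients γ_0, …, γ_{P-1}, independent of the vector component index, such that y_{k+P} = γ_{P-1}·y_{k+P−1} + ⋯ + γ_0·y_k for every k ∈ ℕ. Moreover one may take γ_j = −β_j, where β_j are the coefficients of the monic polynomial ∏_{i=0}^{P-1}(X − z_i) = X^P + β_{P-1}X^{P-1} + ⋯ + β_0. -/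

import Mathlib

open Polynomial Finset Matrix

/-!
Each path contributes to the received pilot `y k` a fixed vector `h i • H i *ᵥ xp` scaled by the
geometric factor `z i ^ k`. Every `z i` is a root of `p = ∏ i, (X - C (z i))`, so each geometric
sequence `k ↦ z i ^ k` satisfies the linear recurrence with characteristic polynomial `p`, and hence
so does every linear combination of them with vector coefficients, in particular `y`.
-/

namespace LinearRecurrence

variable {R : Type*} [CommRing R]

def ofMonic (p : R[X]) : LinearRecurrence R where
  order := p.natDegree
  coeffs i := -p.coeff i

@[simp]
theorem ofMonic_order (p : R[X]) : (ofMonic p).order = p.natDegree := rfl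

@[simp]
theorem ofMonic_coeffs (p : R[X]) (i : Fin (ofMonic p).order) : (ofMonic p).coeffs i = -p.coeff i :=
  rfl

theorem charPoly_ofMonic {p : R[X]} (hp : p.Monic) : (ofMonic p).charPoly = p := by
  simp only [charPoly, ofMonic_coeffs]
  rw [Fin.sum_univ_eq_sum_range (fun i => monomial i (-p.coeff i)), ofMonic_order]
  conv_rhs => rw [hp.as_sum]
  simp only [← C_mul_X_pow_eq_monomial, map_neg, sum_neg_distrib, C_1, one_mul, sub_neg_eq_add]

theorem sum_pow_smul_add_order {M ι : Type*} [AddCommMonoid M] [Module R M]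
    (E : LinearRecurrence R) (s : Finset ι) (q : ι → R) (v : ι → M)
    (hq : ∀ i ∈ s, E.charPoly.IsRoot (q i)) (n : ℕ) :
    ∑ i ∈ s, q i ^ (n + E.order) • v i = ∑ j, E.coeffs j • ∑ i ∈ s, q i ^ (n + j) • v i := by
  simp_rw [smul_sum, smul_smul]
  rw [sum_comm]
  refine sum_congr rfl fun i hi => ?_
  rw [← sum_smul, ← (E.geom_sol_iff_root_charPoly (q i)).2 (hq i hi) n]

end LinearRecurrence

theorem received_pilot_sequence_autoregressive_general
    (P N : ℕ)
    (H : Fin P → Matrix (Fin N) (Fin N) ℂ)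
    (h : Fin P → ℂ)
    (z : Fin P → ℂ)
    (HAFD : ℕ → Matrix (Fin N) (Fin N) ℂ)
    (hHAFD : ∀ k, HAFD k = ∑ i : Fin P, (h i * z i ^ k) • H i)
    (xp : Fin N → ℂ)
    (y : ℕ → (Fin N → ℂ)) (hy : ∀ k, y k = (HAFD k).mulVec xp) :
    ∃ γ : ℕ → ℂ,
      (∀ j, γ j = -((∏ i : Fin P, (X - C (z i))).coeff j)) ∧
      ∀ k : ℕ, y (k + P) = ∑ j ∈ Finset.range P, γ j • y (k + j) := by
  set p := ∏ i : Fin P, (X - C (z i))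
  have hroot : ∀ i ∈ univ, (LinearRecurrence.ofMonic p).charPoly.IsRoot (z i) := fun i hi => by
    rw [LinearRecurrence.charPoly_ofMonic (monic_prod_X_sub_C z univ)]
    exact (isRoot_prod _ _ _).2 ⟨i, hi, root_X_sub_C.2 rfl⟩
  have hy_geom : ∀ k, y k = ∑ i, z i ^ k • h i • H i *ᵥ xp := fun k => by
    simp only [hy, hHAFD, sum_mulVec, smul_mulVec, mul_comm (h _), mul_smul]
  have horder : (LinearRecurrence.ofMonic p).order = P := by simp [p]
  refine ⟨fun j => -p.coeff j, fun j => rfl, fun k => ?_⟩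
  have hrec := LinearRecurrence.sum_pow_smul_add_order _ univ z (fun i => h i • H i *ᵥ xp) hroot k
  simp only [LinearRecurrence.ofMonic_coeffs, ← hy_geom] at hrec
  rwa [Fin.sum_univ_eq_sum_range (fun j => -p.coeff j • y (k + j)), horder] at hrec

/-- Lemma 1: In the AF domain, with channel matrices
`H_{AFD,k} = ∑ i, h̃ i * z i ^ k • H i` (where `z i = exp(-θ i * I)`), the noise-free
received pilot vectors `y k = H_{AFD,k} ⬝ x_p` (for a fixed pilot `x_p` sent on every symbol)
possess a `P`-th order autoregressive property: there exist coefficients `γ_0, …, γ_{P-1}`,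
independent of the vector component index, with `y (k+P) = ∑ j < P, γ j • y (k+j)` for all `k`;
moreover one may take `γ j = -β j` where the `β j` are the coefficients of the monic polynomial
`∏ i, (X - z i)`. -/
theorem received_pilot_sequence_autoregressive
    (P N : ℕ) (hP : 1 ≤ P) (hN : 1 ≤ N)
    (H : Fin P → Matrix (Fin N) (Fin N) ℂ)
    (h : Fin P → ℂ) (θ : Fin P → ℝ)
    (z : Fin P → ℂ) (hz : ∀ i, z i = Complex.exp (-(θ i : ℂ) * Complex.I))
    (HAFD : ℕ → Matrix (Fin N) (Fin N) ℂ)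
    (hHAFD : ∀ k, HAFD k = ∑ i : Fin P, (h i * z i ^ k) • H i)
    (xp : Fin N → ℂ)
    (y : ℕ → (Fin N → ℂ)) (hy : ∀ k, y k = (HAFD k).mulVec xp) :
    ∃ γ : ℕ → ℂ,
      (∀ j, γ j = -((∏ i : Fin P, (X - C (z i))).coeff j)) ∧
      ∀ k : ℕ, y (k + P) = ∑ j ∈ Finset.range P, γ j • y (k + j) :=
  received_pilot_sequence_autoregressive_general P N H h z HAFD hHAFD xp y hy
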